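/- arXiv:1110.4938 — 3 statements merged into one kernel-verified Lean document; each statement's English description precedes it below -/
import Mathlib

section
/- Let ν be a Borel probability measure on 𝕋 and ζ ∈ 𝕋. If |Kν(rζ)| → ∞ as r → 1⁻, then the radial limit of the normalized Cauchy transform satisfies lim_{r→1⁻} K(ξ̄ν)(rζ)/Kν(rζ) = conj(ζ). -/
/-!
On `𝕋` we have `z ξ̄ / (1 - ξ̄ z) = 1 / (1 - ξ̄ z) - 1`, so integrating against `ν`
gives `z K(ξ̄ν)(z) = Kν(z) - 1`. Hence `K(ξ̄ν)/Kν = z⁻¹ (1 - 1/Kν(z))`, which tends to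
`ζ⁻¹ = conj ζ` along `z = rζ` as soon as `Kν(rζ) → ∞`.
-/

open MeasureTheory Filter ContinuousLinearMap
open scoped ENNReal Topology ComplexConjugate

noncomputable section

/-- The Cauchy transform `K(fτ)(z) = ∫ f(ξ)/(1 - conj(ξ) z) dτ(ξ)` of the measure `fτ`. -/
def cauchyT (τ : Measure ℂ) (f : ℂ → ℂ) (z : ℂ) : ℂ :=
  ∫ ξ, f ξ / (1 - conj ξ * z) ∂τ

/-- The function `ξ ↦ conj ξ`. -/
def xibarFun : ℂ → ℂ := fun ξ => conj ξ

/-- The constant function `1`. -/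
def oneFun : ℂ → ℂ := fun _ => 1

/-- The operator `Û_γ = M_ξ + (γ - 1)⟨·, ξ̄⟩1` on `L²(μ)`, where `Mxi` is multiplication by
the independent variable, `xibar` is the function `ξ ↦ conj ξ` and `one` is the constant
function `1`.  (Here `⟨f, ξ̄⟩ = ∫ f(ξ) ξ dμ(ξ)` is linear in `f`.) -/
def clarkOp (μ : Measure ℂ) (Mxi : Lp ℂ 2 μ →L[ℂ] Lp ℂ 2 μ) (xibar one : Lp ℂ 2 μ)
    (γ : ℂ) : Lp ℂ 2 μ →L[ℂ] Lp ℂ 2 μ :=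
  Mxi + (γ - 1) • ((innerSL ℂ xibar).smulRight one)

/-- The scalar characteristic function
`θ(z) = ⟨(-U + z D₊ (I - z U*)⁻¹ D) ξ̄, 1⟩` of a contraction `U` on `L²(μ)` with defect
operators `Dm = (I - U*U)^{1/2}` and `Ds = (I - U U*)^{1/2}`. -/
def charF {μ : Measure ℂ} (U Dm Ds : Lp ℂ 2 μ →L[ℂ] Lp ℂ 2 μ) (xibar one : Lp ℂ 2 μ)
    (z : ℂ) : ℂ :=
  inner ℂ one ((-U + z • (Ds ∘L Ring.inverse (1 - z • ContinuousLinearMap.adjoint U) ∘L Dm))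
    xibar)

/-- `T^{(k)}`: nonnegative powers of `T`; powers of the adjoint for negative `k`. -/
def zpowOp {E : Type*} [NormedAddCommGroup E] [InnerProductSpace ℂ E] [CompleteSpace E]
    (T : E →L[ℂ] E) (k : ℤ) : E →L[ℂ] E :=
  if 0 ≤ k then T ^ k.toNat else (ContinuousLinearMap.adjoint T) ^ (-k).toNat

/-- Normalized Lebesgue (arclength) measure on the unit circle `𝕋`, as a measure on `ℂ`. -/
def mCircle : Measure ℂ :=
  (ENNReal.ofReal (2 * Real.pi))⁻¹ •
    (volume.restrict (Set.Ioc (0:ℝ) (2 * Real.pi))).map (circleMap 0 1)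

/-- A function on the disc is *inner* if its radial limits exist and have modulus one at
`m`-almost every point of the unit circle. -/
def IsInnerFun (f : ℂ → ℂ) : Prop :=
  ∀ᵐ ξ ∂mCircle, ∃ L : ℂ,
    Tendsto (fun r : ℝ => f ((r : ℂ) * ξ)) (𝓝[<] (1:ℝ)) (𝓝 L) ∧ ‖L‖ = 1

lemma abs_one_sub_norm_le_norm_one_sub_conj_mul {ξ : ℂ} (hξ : ‖ξ‖ = 1) (z : ℂ) :
    |1 - ‖z‖| ≤ ‖1 - conj ξ * z‖ := by
  simpa [hξ] using abs_norm_sub_norm_le (1 : ℂ) (conj ξ * z)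

lemma one_sub_conj_mul_ne_zero {ξ z : ℂ} (hξ : ‖ξ‖ = 1) (hz : ‖z‖ ≠ 1) :
    1 - conj ξ * z ≠ 0 := by
  rw [← norm_pos_iff]
  exact (abs_pos.2 (sub_ne_zero.2 hz.symm)).trans_le
    (abs_one_sub_norm_le_norm_one_sub_conj_mul hξ z)

section CircleMeasure

variable {τ : Measure ℂ} (hτ : τ (Metric.sphere (0:ℂ) 1)ᶜ = 0)
include hτ

lemma ae_norm_eq_one_of_sphere_compl_null : ∀ᵐ ξ ∂τ, ‖ξ‖ = 1 := by
  filter_upwards [mem_ae_iff.2 hτ] with ξ hξ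
  simpa using hξ

lemma integrable_cauchyKernel [IsFiniteMeasure τ] {z : ℂ} (hz : ‖z‖ ≠ 1) :
    Integrable (fun ξ => 1 / (1 - conj ξ * z)) τ := by
  refine Integrable.mono' (integrable_const |1 - ‖z‖|⁻¹)
    (measurable_const.div (by fun_prop)).aestronglyMeasurable ?_
  filter_upwards [ae_norm_eq_one_of_sphere_compl_null hτ] with ξ hξ
  rw [norm_div, norm_one, one_div]
  exact inv_anti₀ (abs_pos.2 (sub_ne_zero.2 hz.symm))
    (abs_one_sub_norm_le_norm_one_sub_conj_mul hξ z)

lemma mul_cauchyT_xibarFun [IsFiniteMeasure τ] {z : ℂ} (hz : ‖z‖ ≠ 1) :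
    z * cauchyT τ xibarFun z = cauchyT τ oneFun z - τ.real Set.univ := by
  have hpointwise : ∀ᵐ ξ ∂τ, z * (conj ξ / (1 - conj ξ * z)) = 1 / (1 - conj ξ * z) - 1 := by
    filter_upwards [ae_norm_eq_one_of_sphere_compl_null hτ] with ξ hξ
    rw [mul_div_assoc', div_sub_one (one_sub_conj_mul_ne_zero hξ hz)]
    ring
  simp only [cauchyT, xibarFun]
  rw [← integral_const_mul, integral_congr_ae hpointwise,
    integral_sub (integrable_cauchyKernel hτ hz) (integrable_const 1)]
  simp [oneFun]

end CircleMeasure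

theorem statement8
    (ν : Measure ℂ) [IsProbabilityMeasure ν] (hν : ν (Metric.sphere (0:ℂ) 1)ᶜ = 0)
    (ζ : ℂ) (hζ : ‖ζ‖ = 1)
    (hblow : Tendsto (fun r : ℝ => ‖cauchyT ν oneFun ((r : ℂ) * ζ)‖)
      (𝓝[<] (1:ℝ)) atTop) :
    Tendsto (fun r : ℝ => cauchyT ν xibarFun ((r : ℂ) * ζ) / cauchyT ν oneFun ((r : ℂ) * ζ))
      (𝓝[<] (1:ℝ)) (𝓝 (conj ζ)) := by
  have hζ0 : ζ ≠ 0 := norm_ne_zero_iff.1 (hζ ▸ one_ne_zero)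
  have hK_inv : Tendsto (fun r : ℝ => (cauchyT ν oneFun ((r : ℂ) * ζ))⁻¹) (𝓝[<] (1:ℝ)) (𝓝 0) :=
    tendsto_inv₀_cobounded.comp (tendsto_norm_atTop_iff_cobounded.1 hblow)
  have hz_inv : Tendsto (fun r : ℝ => ((r : ℂ) * ζ)⁻¹) (𝓝[<] (1:ℝ)) (𝓝 ζ⁻¹) := by
    have : Tendsto (fun r : ℝ => (r : ℂ) * ζ) (𝓝[<] (1:ℝ)) (𝓝 ζ) := by
      have hcont : Continuous fun r : ℝ => (r : ℂ) * ζ := by fun_prop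
      simpa using (hcont.tendsto 1).mono_left nhdsWithin_le_nhds
    exact this.inv₀ hζ0
  have hlim := hz_inv.mul (tendsto_const_nhds (x := (1:ℂ)).sub hK_inv)
  rw [sub_zero, mul_one, Complex.inv_eq_conj hζ] at hlim
  refine hlim.congr' ?_
  filter_upwards [hblow.eventually_gt_atTop 0, Ioo_mem_nhdsLT (zero_lt_one' ℝ)]
    with r hK hr
  have hz : ‖(r : ℂ) * ζ‖ ≠ 1 := by
    rw [norm_mul, Complex.norm_real, hζ, mul_one, Real.norm_of_nonneg hr.1.le]
    exact hr.2.ne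
  have hz0 : (r : ℂ) * ζ ≠ 0 := mul_ne_zero (Complex.ofReal_ne_zero.2 hr.1.ne') hζ0
  have hmul := mul_cauchyT_xibarFun hν hz
  rw [probReal_univ, Complex.ofReal_one] at hmul
  rw [eq_div_iff (norm_pos_iff.1 hK), (eq_inv_mul_iff_mul_eq₀ hz0).2 hmul]
  field_simp [norm_pos_iff.1 hK]
end
end

section
/- For every γ ∈ 𝕋 and every z in the open unit disc 𝔻, the Cauchy transform of the spectral measure μ_γ and the characteristic function θ of Û₀ satisfy Kμ_γ(z)·(1 − conj(γ)·θ(z)) = 1. -/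
open MeasureTheory Filter ContinuousLinearMap
open scoped ENNReal Topology ComplexConjugate

noncomputable section

/-!
Both sides are matrix entries of resolvents of adjoints. Expanding `1/(1 - ξ̄z)` geometrically
and matching moments, `Kμ_γ(z) = ⟨(I - zÛ_γ*)⁻¹ 1, 1⟩`. Since `Û₀ ξ̄ = 0` and `Û₀* 1 = 0`, the
defect operators fix `ξ̄` and `1`, so `θ(z) = z ⟨(I - zÛ₀*)⁻¹ ξ̄, 1⟩`. Finally
`Û_γ* = Û₀* + γ̄ ⟨·, 1⟩ ξ̄` is a rank-one perturbation of `Û₀*`, and solving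
`(I - zÛ₀*) w = 1 + zγ̄ ⟨w, 1⟩ ξ̄` for `w = (I - zÛ_γ*)⁻¹ 1` gives `F = 1 + γ̄ θ F` for
`F = ⟨w, 1⟩`.
-/

namespace ContinuousLinearMap

variable {E : Type*} [NormedAddCommGroup E] [InnerProductSpace ℂ E]

theorem IsPositive.apply_eq_self_of_comp_self_eq_one_sub {S R : E →L[ℂ] E} (hS : S.IsPositive)
    (hSS : S ∘L S = 1 - R) {x : E} (hx : R x = 0) : S x = x := by
  have hSSx : S (S x) = x := by simpa [hx] using congr($hSS x)
  set y := S x - x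
  have hSy : S y = -y := by simp only [y, map_sub, hSSx]; abel
  have hy : RCLike.re (inner ℂ y y) ≤ 0 := by
    simpa [hSy, inner_neg_left] using hS.re_inner_nonneg_left y
  exact sub_eq_zero.1 (re_inner_self_nonpos.1 hy)

theorem norm_smul_adjoint_lt_one [CompleteSpace E] {T : E →L[ℂ] E} (hT : ‖T‖ ≤ 1) {z : ℂ}
    (hz : ‖z‖ < 1) : ‖z • adjoint T‖ < 1 := by
  rw [norm_smul, LinearIsometryEquiv.norm_map]
  exact lt_of_le_of_lt (mul_le_of_le_one_right (norm_nonneg z) hT) hz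

theorem hasSum_inner_pow_apply_ring_inverse_one_sub [CompleteSpace E] {S : E →L[ℂ] E}
    (hS : ‖S‖ < 1) (u v : E) :
    HasSum (fun n : ℕ => inner ℂ u ((S ^ n) v)) (inner ℂ u (Ring.inverse (1 - S) v)) :=
  (hasSum_geom_series_inverse S hS).mapL ((innerSL ℂ u).comp (apply ℂ E v))

/-- The Aronszajn–Krein formula. -/
theorem inner_ring_inverse_mul_one_sub_eq_one {S S' : E →L[ℂ] E} {e y : E} {c z : ℂ}
    (he : inner ℂ e e = (1 : ℂ)) (hSe : S e = 0) (hS' : ∀ w, S' w = S w + (c * inner ℂ e w) • y)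
    (hA : IsUnit (1 - z • S)) (hB : IsUnit (1 - z • S')) :
    inner ℂ e (Ring.inverse (1 - z • S') e) *
      (1 - c * (z * inner ℂ e (Ring.inverse (1 - z • S) y))) = 1 := by
  set w := Ring.inverse (1 - z • S') e
  have hAinv : ∀ v, Ring.inverse (1 - z • S) ((1 - z • S) v) = v := fun v => by
    rw [← mul_apply_eq_comp, Ring.inverse_mul_cancel _ hA, one_apply_eq_self]
  have hBw : (1 - z • S') w = e := by
    rw [← mul_apply_eq_comp, Ring.mul_inverse_cancel _ hB, one_apply_eq_self]
  have hAw : (1 - z • S) w = e + (z * (c * inner ℂ e w)) • y := by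
    have hAB : (1 - z • S) w = (1 - z • S') w + (z * (c * inner ℂ e w)) • y := by
      simp only [sub_apply, smul_apply, hS', smul_add, smul_smul]
      abel
    rw [hAB, hBw]
  have hAe : Ring.inverse (1 - z • S) e = e := by simpa [hSe] using hAinv e
  have hw : w = e + (z * (c * inner ℂ e w)) • Ring.inverse (1 - z • S) y :=
    calc w = Ring.inverse (1 - z • S) ((1 - z • S) w) := (hAinv w).symm
      _ = _ := by rw [hAw, map_add, map_smul, hAe]
  have hF : inner ℂ e w = 1 + c * (z * inner ℂ e (Ring.inverse (1 - z • S) y)) * inner ℂ e w := by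
    conv_lhs => rw [hw]
    rw [inner_add_right, inner_smul_right, he]
    ring
  linear_combination hF

end ContinuousLinearMap

theorem zpowOp_neg_natCast {E : Type*} [NormedAddCommGroup E] [InnerProductSpace ℂ E]
    [CompleteSpace E] (T : E →L[ℂ] E) (n : ℕ) : zpowOp T (-n) = (adjoint T) ^ n := by
  rcases n.eq_zero_or_pos with rfl | hn
  · simp [zpowOp]
  · simp [zpowOp, hn.ne']

theorem charF_eq_of_apply_eq {μ : Measure ℂ} {U Dm Ds : Lp ℂ 2 μ →L[ℂ] Lp ℂ 2 μ}
    {xibar one : Lp ℂ 2 μ} (hU : U xibar = 0) (hDm : Dm xibar = xibar)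
    (hDs : IsSelfAdjoint Ds) (hDs1 : Ds one = one) (z : ℂ) :
    charF U Dm Ds xibar one z =
      z * inner ℂ one (Ring.inverse (1 - z • adjoint U) xibar) := by
  rw [charF, add_apply, neg_apply, hU, neg_zero, zero_add, smul_apply, comp_apply, comp_apply,
    hDm, inner_smul_right, ← adjoint_inner_left, hDs.adjoint_eq, hDs1]

theorem ae_norm_eq_one {τ : Measure ℂ} (hτ : τ (Metric.sphere (0 : ℂ) 1)ᶜ = 0) :
    ∀ᵐ ξ ∂τ, ‖ξ‖ = 1 := by
  have h : ∀ᵐ ξ ∂τ, ξ ∈ Metric.sphere (0 : ℂ) 1 := mem_ae_iff.2 hτ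
  exact h.mono fun _ hξ => mem_sphere_zero_iff_norm.1 hξ

theorem hasSum_cauchyT_oneFun {τ : Measure ℂ} [IsFiniteMeasure τ] (hτ : ∀ᵐ ξ ∂τ, ‖ξ‖ ≤ 1)
    {z : ℂ} (hz : ‖z‖ < 1) :
    HasSum (fun n : ℕ => z ^ n * ∫ ξ, conj ξ ^ n ∂τ) (cauchyT τ oneFun z) := by
  have hterm : ∀ᵐ ξ ∂τ, ‖conj ξ * z‖ < 1 := hτ.mono fun ξ hξ => by
    rw [norm_mul, Complex.norm_conj]
    exact lt_of_le_of_lt (mul_le_of_le_one_left (norm_nonneg z) hξ) hz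
  simp_rw [← integral_const_mul, ← mul_pow, mul_comm z]
  refine hasSum_integral_of_dominated_convergence (fun n _ => ‖z‖ ^ n)
    (fun n => by fun_prop) (fun n => hτ.mono fun ξ hξ => ?_)
    (.of_forall fun _ => summable_geometric_of_lt_one (norm_nonneg z) hz)
    (integrable_const _) (hterm.mono fun ξ hξ => ?_)
  · rw [norm_pow, norm_mul, Complex.norm_conj]
    exact pow_le_pow_left₀ (by positivity) (mul_le_of_le_one_left (norm_nonneg z) hξ) n
  · simpa [oneFun] using hasSum_geometric_of_norm_lt_one hξ

theorem inner_adjoint_pow_eq_integral_conj_pow {E : Type*} [NormedAddCommGroup E]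
    [InnerProductSpace ℂ E] [CompleteSpace E] {T : E →L[ℂ] E} {v : E} {τ : Measure ℂ}
    (hτ : τ (Metric.sphere (0 : ℂ) 1)ᶜ = 0)
    (hmom : ∀ k : ℤ, inner ℂ v (zpowOp T k v) = ∫ ξ, ξ ^ k ∂τ) (n : ℕ) :
    inner ℂ v ((adjoint T ^ n) v) = ∫ ξ, conj ξ ^ n ∂τ := by
  rw [← zpowOp_neg_natCast, hmom]
  refine integral_congr_ae ((ae_norm_eq_one hτ).mono fun ξ hξ => ?_)
  have hinv : ξ⁻¹ = conj ξ :=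
    inv_eq_of_mul_eq_one_right (by rw [Complex.mul_conj', hξ]; norm_num)
  dsimp only
  rw [zpow_neg, zpow_natCast, ← inv_pow, hinv]

theorem cauchyT_oneFun_eq_inner_ring_inverse {E : Type*} [NormedAddCommGroup E]
    [InnerProductSpace ℂ E] [CompleteSpace E] {T : E →L[ℂ] E} (hT : ‖T‖ ≤ 1) {v : E}
    {τ : Measure ℂ} [IsFiniteMeasure τ] (hτ : τ (Metric.sphere (0 : ℂ) 1)ᶜ = 0)
    (hmom : ∀ k : ℤ, inner ℂ v (zpowOp T k v) = ∫ ξ, ξ ^ k ∂τ) {z : ℂ} (hz : ‖z‖ < 1) :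
    cauchyT τ oneFun z = inner ℂ v (Ring.inverse (1 - z • adjoint T) v) := by
  refine (hasSum_cauchyT_oneFun ((ae_norm_eq_one hτ).mono fun _ h => h.le) hz).unique ?_
  convert hasSum_inner_pow_apply_ring_inverse_one_sub (norm_smul_adjoint_lt_one hT hz) v v
    using 2 with n
  rw [smul_pow, smul_apply, inner_smul_right, inner_adjoint_pow_eq_integral_conj_pow hτ hmom]

section clarkOp

variable {μ : Measure ℂ} {Mxi : Lp ℂ 2 μ →L[ℂ] Lp ℂ 2 μ} {one xibar : Lp ℂ 2 μ}

theorem L2.inner_eq_integral_conj_mul (f g : Lp ℂ 2 μ) :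
    inner ℂ f g = ∫ ξ, conj (f ξ) * g ξ ∂μ := by
  simp only [L2.inner_def, RCLike.inner_apply, mul_comm]

theorem inner_self_eq_one_of_ae_norm_eq_one [IsProbabilityMeasure μ] {f : Lp ℂ 2 μ}
    (hf : ∀ᵐ ξ ∂μ, ‖f ξ‖ = 1) : inner ℂ f f = (1 : ℂ) := by
  rw [L2.inner_eq_integral_conj_mul, integral_congr_ae (g := fun _ => (1 : ℂ)) ?_]
  · simp
  · filter_upwards [hf] with ξ h
    rw [Complex.conj_mul', h]
    norm_num

theorem inner_one_one [IsProbabilityMeasure μ] (hone : ∀ᵐ ξ ∂μ, one ξ = 1) :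
    inner ℂ one one = (1 : ℂ) :=
  inner_self_eq_one_of_ae_norm_eq_one (by filter_upwards [hone] with ξ h; simp [h])

theorem inner_one_Mxi (hMxi : ∀ f : Lp ℂ 2 μ, ∀ᵐ ξ ∂μ, (Mxi f) ξ = ξ * f ξ)
    (hone : ∀ᵐ ξ ∂μ, one ξ = 1) (hxibar : ∀ᵐ ξ ∂μ, xibar ξ = conj ξ) (g : Lp ℂ 2 μ) :
    inner ℂ one (Mxi g) = inner ℂ xibar g := by
  rw [L2.inner_eq_integral_conj_mul, L2.inner_eq_integral_conj_mul]
  refine integral_congr_ae ?_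
  filter_upwards [hone, hxibar, hMxi g] with ξ h1 h2 h3
  simp [h1, h2, h3]

theorem inner_Mxi_Mxi (hμ : μ (Metric.sphere (0 : ℂ) 1)ᶜ = 0)
    (hMxi : ∀ f : Lp ℂ 2 μ, ∀ᵐ ξ ∂μ, (Mxi f) ξ = ξ * f ξ) (f g : Lp ℂ 2 μ) :
    inner ℂ (Mxi f) (Mxi g) = inner ℂ f g := by
  rw [L2.inner_eq_integral_conj_mul, L2.inner_eq_integral_conj_mul]
  refine integral_congr_ae ?_
  filter_upwards [hMxi f, hMxi g, ae_norm_eq_one hμ] with ξ h1 h2 h3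
  calc conj (Mxi f ξ) * Mxi g ξ = (conj ξ * ξ) * (conj (f ξ) * g ξ) := by
        rw [h1, h2, map_mul]; ring
    _ = conj (f ξ) * g ξ := by rw [Complex.conj_mul', h3]; norm_num

theorem Mxi_xibar_eq_one (hμ : μ (Metric.sphere (0 : ℂ) 1)ᶜ = 0)
    (hMxi : ∀ f : Lp ℂ 2 μ, ∀ᵐ ξ ∂μ, (Mxi f) ξ = ξ * f ξ)
    (hone : ∀ᵐ ξ ∂μ, one ξ = 1) (hxibar : ∀ᵐ ξ ∂μ, xibar ξ = conj ξ) :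
    Mxi xibar = one := by
  refine Lp.ext ?_
  filter_upwards [hMxi xibar, hone, hxibar, ae_norm_eq_one hμ] with ξ h1 h2 h3 h4
  rw [h1, h2, h3, Complex.mul_conj', h4]
  norm_num

theorem clarkOp_apply (γ : ℂ) (f : Lp ℂ 2 μ) :
    clarkOp μ Mxi xibar one γ f = Mxi f + ((γ - 1) * inner ℂ xibar f) • one := by
  simp [clarkOp, smul_smul]

theorem adjoint_clarkOp_apply (γ : ℂ) (w : Lp ℂ 2 μ) :
    adjoint (clarkOp μ Mxi xibar one γ) w =
      adjoint (clarkOp μ Mxi xibar one 0) w + (conj γ * inner ℂ one w) • xibar := by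
  refine ext_inner_left ℂ fun v => ?_
  rw [adjoint_inner_right, inner_add_right, adjoint_inner_right, inner_smul_right,
    clarkOp_apply, clarkOp_apply, inner_add_left, inner_add_left, inner_smul_left,
    inner_smul_left, ← inner_conj_symm xibar v]
  simp only [map_sub, map_mul, map_one, map_zero, Complex.conj_conj]
  ring

theorem clarkOp_zero_xibar [IsProbabilityMeasure μ] (hμ : μ (Metric.sphere (0 : ℂ) 1)ᶜ = 0)
    (hMxi : ∀ f : Lp ℂ 2 μ, ∀ᵐ ξ ∂μ, (Mxi f) ξ = ξ * f ξ)
    (hone : ∀ᵐ ξ ∂μ, one ξ = 1) (hxibar : ∀ᵐ ξ ∂μ, xibar ξ = conj ξ) :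
    clarkOp μ Mxi xibar one 0 xibar = 0 := by
  have hxibar1 : ∀ᵐ ξ ∂μ, ‖xibar ξ‖ = 1 := by
    filter_upwards [hxibar, ae_norm_eq_one hμ] with ξ h1 h2
    rw [h1, Complex.norm_conj, h2]
  rw [clarkOp_apply, Mxi_xibar_eq_one hμ hMxi hone hxibar,
    inner_self_eq_one_of_ae_norm_eq_one hxibar1]
  simp

theorem adjoint_clarkOp_zero_one [IsProbabilityMeasure μ]
    (hMxi : ∀ f : Lp ℂ 2 μ, ∀ᵐ ξ ∂μ, (Mxi f) ξ = ξ * f ξ)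
    (hone : ∀ᵐ ξ ∂μ, one ξ = 1) (hxibar : ∀ᵐ ξ ∂μ, xibar ξ = conj ξ) :
    adjoint (clarkOp μ Mxi xibar one 0) one = 0 := by
  refine ext_inner_left ℂ fun v => ?_
  rw [adjoint_inner_right, inner_zero_right, clarkOp_apply, inner_add_left, inner_smul_left,
    ← inner_conj_symm, inner_one_Mxi hMxi hone hxibar, inner_one_one hone]
  simp

theorem norm_clarkOp_apply_sq [IsProbabilityMeasure μ] (hμ : μ (Metric.sphere (0 : ℂ) 1)ᶜ = 0)
    (hMxi : ∀ f : Lp ℂ 2 μ, ∀ᵐ ξ ∂μ, (Mxi f) ξ = ξ * f ξ)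
    (hone : ∀ᵐ ξ ∂μ, one ξ = 1) (hxibar : ∀ᵐ ξ ∂μ, xibar ξ = conj ξ) (γ : ℂ)
    (f : Lp ℂ 2 μ) :
    ‖clarkOp μ Mxi xibar one γ f‖ ^ 2 = ‖f‖ ^ 2 + (‖γ‖ ^ 2 - 1) * ‖inner ℂ xibar f‖ ^ 2 := by
  have hnorm (x : Lp ℂ 2 μ) : (‖x‖ : ℂ) ^ 2 = inner ℂ x x := (inner_self_eq_norm_sq_to_K x).symm
  apply Complex.ofReal_injective
  push_cast
  rw [hnorm, hnorm, ← Complex.mul_conj', ← Complex.conj_mul', clarkOp_apply, inner_add_left,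
    inner_add_right, inner_add_right, inner_smul_left, inner_smul_right, inner_smul_left,
    inner_smul_right, inner_Mxi_Mxi hμ hMxi, inner_one_Mxi hMxi hone hxibar,
    ← inner_conj_symm (Mxi f) one, inner_one_Mxi hMxi hone hxibar, inner_one_one hone]
  simp only [map_sub, map_mul, map_one]
  ring

theorem norm_clarkOp_le_one [IsProbabilityMeasure μ] (hμ : μ (Metric.sphere (0 : ℂ) 1)ᶜ = 0)
    (hMxi : ∀ f : Lp ℂ 2 μ, ∀ᵐ ξ ∂μ, (Mxi f) ξ = ξ * f ξ)
    (hone : ∀ᵐ ξ ∂μ, one ξ = 1) (hxibar : ∀ᵐ ξ ∂μ, xibar ξ = conj ξ) {γ : ℂ} (hγ : ‖γ‖ ≤ 1) :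
    ‖clarkOp μ Mxi xibar one γ‖ ≤ 1 := by
  refine opNorm_le_bound _ zero_le_one fun f => ?_
  have hsq := norm_clarkOp_apply_sq hμ hMxi hone hxibar γ f
  have hγ2 : ‖γ‖ ^ 2 ≤ 1 := pow_le_one₀ (norm_nonneg γ) hγ
  rw [one_mul]
  refine le_of_pow_le_pow_left₀ two_ne_zero (norm_nonneg f) ?_
  nlinarith [sq_nonneg ‖inner ℂ xibar f‖]

end clarkOp

theorem statement11
    (μ : Measure ℂ) [IsProbabilityMeasure μ] (hμ : μ (Metric.sphere (0:ℂ) 1)ᶜ = 0)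
    (Mxi : Lp ℂ 2 μ →L[ℂ] Lp ℂ 2 μ)
    (hMxi : ∀ f : Lp ℂ 2 μ, ∀ᵐ ξ ∂μ, (Mxi f) ξ = ξ * f ξ)
    (one xibar : Lp ℂ 2 μ)
    (hone : ∀ᵐ ξ ∂μ, one ξ = 1) (hxibar : ∀ᵐ ξ ∂μ, xibar ξ = conj ξ)
    -- `D0` and `Ds0` are the positive square roots of `I - Û₀* Û₀` and `I - Û₀ Û₀*`
    (D0 Ds0 : Lp ℂ 2 μ →L[ℂ] Lp ℂ 2 μ)
    (hD0pos : D0.IsPositive)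
    (hD0 : D0 ∘L D0 = 1 - ContinuousLinearMap.adjoint (clarkOp μ Mxi xibar one 0) ∘L
      clarkOp μ Mxi xibar one 0)
    (hDs0pos : Ds0.IsPositive)
    (hDs0 : Ds0 ∘L Ds0 = 1 - clarkOp μ Mxi xibar one 0 ∘L
      ContinuousLinearMap.adjoint (clarkOp μ Mxi xibar one 0))
    (γ : ℂ) (hγ : ‖γ‖ = 1)
    -- `μγ` is the spectral measure of `Û_γ` with respect to the cyclic vector `1`
    (μγ : Measure ℂ) [IsProbabilityMeasure μγ] (hμγsupp : μγ (Metric.sphere (0:ℂ) 1)ᶜ = 0)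
    (hμγmom : ∀ k : ℤ,
      (inner ℂ one (zpowOp (clarkOp μ Mxi xibar one γ) k one) : ℂ) = ∫ ξ, ξ ^ k ∂μγ)
    (z : ℂ) (hz : ‖z‖ < 1) :
    cauchyT μγ oneFun z *
      (1 - conj γ * charF (clarkOp μ Mxi xibar one 0) D0 Ds0 xibar one z) = 1 := by
  set U₀ := clarkOp μ Mxi xibar one 0
  have hU₀xibar : U₀ xibar = 0 := clarkOp_zero_xibar hμ hMxi hone hxibar
  have hU₀one : adjoint U₀ one = 0 := adjoint_clarkOp_zero_one hMxi hone hxibar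
  have hD0xibar : D0 xibar = xibar :=
    hD0pos.apply_eq_self_of_comp_self_eq_one_sub hD0 (by simp [hU₀xibar])
  have hDs0one : Ds0 one = one :=
    hDs0pos.apply_eq_self_of_comp_self_eq_one_sub hDs0 (by simp [hU₀one])
  have hunit : ∀ {β : ℂ}, ‖β‖ ≤ 1 → IsUnit (1 - z • adjoint (clarkOp μ Mxi xibar one β)) :=
    fun hβ => isUnit_one_sub_of_norm_lt_one
      (norm_smul_adjoint_lt_one (norm_clarkOp_le_one hμ hMxi hone hxibar hβ) hz)
  rw [charF_eq_of_apply_eq hU₀xibar hD0xibar hDs0pos.isSelfAdjoint hDs0one,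
    cauchyT_oneFun_eq_inner_ring_inverse (norm_clarkOp_le_one hμ hMxi hone hxibar hγ.le)
      hμγsupp hμγmom hz]
  exact inner_ring_inverse_mul_one_sub_eq_one (inner_one_one hone) hU₀one
    (adjoint_clarkOp_apply γ) (hunit (by simp)) (hunit hγ.le)

end
end

section
/- Let β ∈ ℂ with |β| < 1 and z in the open unit disc 𝔻. The operator I − z Û_β* on L²(μ) is invertible; set x = (I − z Û_β*)⁻¹ ξ̄. Then Kμ(z) − z·conj(β)·K(ξ̄μ)(z) ≠ 0 and ⟨x, 1⟩ = K(ξ̄μ)(z) / (Kμ(z) − z·conj(β)·K(ξ̄μ)(z)). -/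
/-!
With `A = I - z M_ξ*` and `c = z (β̄ - 1)`, the operator `I - z Û_β*` is the rank-one perturbation
`A - c ⟨·, 1⟩ ξ̄` of `A`, and `A` is invertible because `M_ξ` is an isometry (`μ` lives on `𝕋`).
On `𝕋`, `M_ξ*` is multiplication by `ξ̄`, so `v = ξ̄ / (1 - ξ̄ z)` solves `A v = ξ̄`, and
`⟨v, 1⟩ = K(ξ̄μ)(z)`. By the Sherman–Morrison formula the perturbation is invertible as soon as
`D = 1 - c K(ξ̄μ)(z) ≠ 0`, and then it maps `D⁻¹ v` to `ξ̄`. Since `1/(1 - ξ̄z) - zξ̄/(1 - ξ̄z) = 1`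
we have `Kμ = 1 + z K(ξ̄μ)`, hence `D = Kμ - z β̄ K(ξ̄μ) = (1 - β̄) Kμ + β̄`. This cannot vanish:
`Re (1 - w)⁻¹ > 1/2` for `|w| < 1` gives both `Re Kμ(z) > 1/2` and `Re (-β̄ / (1 - β̄)) < 1/2`.
-/

open MeasureTheory Filter ContinuousLinearMap
open scoped ENNReal Topology ComplexConjugate

noncomputable section

open InnerProductSpace

section RankOnePerturbation

variable {E : Type*} [NormedAddCommGroup E] [InnerProductSpace ℂ E]

lemma isUnit_one_sub_rankOne {w u : E} (h : (inner ℂ u w : ℂ) ≠ 1) :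
    IsUnit (1 - rankOne ℂ w u) := by
  set P := rankOne ℂ w u
  set a : ℂ := inner ℂ u w
  have hPP : P * P = a • P := rankOne_comp_rankOne w u w u
  have hP : (1 - a)⁻¹ • (P - a • P) = P := by
    rw [show P - a • P = (1 - a) • P by rw [sub_smul, one_smul], smul_smul,
      inv_mul_cancel₀ (sub_ne_zero.mpr (Ne.symm h)), one_smul]
  refine ⟨⟨1 - P, 1 + (1 - a)⁻¹ • P, ?_, ?_⟩, rfl⟩ <;>
  · simp only [mul_add, add_mul, sub_mul, mul_sub, mul_one, one_mul, mul_smul_comm,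
      smul_mul_assoc, hPP]
    linear_combination (norm := module) hP

lemma isUnit_sub_smul_rankOne_and_inverse_apply {A : E →L[ℂ] E} (hA : IsUnit A) {u v x : E}
    (hv : A v = x) {c : ℂ} (hD : 1 - c * inner ℂ u v ≠ 0) :
    IsUnit (A - c • rankOne ℂ x u) ∧
      Ring.inverse (A - c • rankOne ℂ x u) x = (1 - c * inner ℂ u v)⁻¹ • v := by
  set T := A - c • rankOne ℂ x u
  have hfactor : T = A * (1 - rankOne ℂ (c • v) u) := by
    rw [mul_sub, mul_one, mul_def, comp_rankOne, map_smul, hv, map_smul, smul_apply]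
  have hT : IsUnit T := hfactor ▸ hA.mul (isUnit_one_sub_rankOne (by
    rw [inner_smul_right]
    exact fun h => hD (by rw [h, sub_self])))
  refine ⟨hT, ?_⟩
  have hTv : T v = (1 - c * inner ℂ u v) • x := by
    simp only [T, sub_apply, smul_apply, rankOne_apply, hv]
    module
  have hTw : T ((1 - c * inner ℂ u v)⁻¹ • v) = x := by
    rw [map_smul, hTv, smul_smul, inv_mul_cancel₀ hD, one_smul]
  rw [← hTw, ← mul_apply_eq_comp, Ring.inverse_mul_cancel T hT, one_apply_eq_self]

end RankOnePerturbation

lemma re_inv_one_sub_ge {w : ℂ} (hw : ‖w‖ < 1) :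
    1 / 2 + (1 - ‖w‖) / (2 * (1 + ‖w‖)) ≤ ((1 - w)⁻¹).re := by
  have hw1 : 1 - w ≠ 0 := fun h => by simp [← sub_eq_zero.mp h] at hw
  have hN : 0 < Complex.normSq (1 - w) := Complex.normSq_pos.mpr hw1
  have hre : 2 * (1 - w).re = Complex.normSq (1 - w) + 1 - ‖w‖ ^ 2 := by
    rw [Complex.normSq_sub, Complex.normSq_one, ← Complex.sq_norm]
    simp only [Complex.sub_re, Complex.one_re, one_mul, Complex.conj_re]
    ring
  have hle : Complex.normSq (1 - w) ≤ (1 + ‖w‖) ^ 2 := by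
    rw [← Complex.sq_norm]
    have := norm_sub_le (1 : ℂ) w
    rw [norm_one] at this
    exact pow_le_pow_left₀ (norm_nonneg _) this 2
  rw [Complex.inv_re, le_div_iff₀ hN, div_add_div _ _ (by norm_num) (by positivity),
    div_mul_eq_mul_div, div_le_iff₀ (by positivity)]
  nlinarith [norm_nonneg w]

lemma one_sub_mul_add_ne_zero {b K : ℂ} (hb : ‖b‖ < 1) (hK : 1 / 2 < K.re) :
    (1 - b) * K + b ≠ 0 := by
  intro h
  have hb1 : 1 - b ≠ 0 := fun hb' => by simp [← sub_eq_zero.mp hb'] at hb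
  have hKeq : K = 1 - (1 - b)⁻¹ := by
    field_simp
    linear_combination h
  have hre := re_inv_one_sub_ge hb
  have hpos : 0 < (1 - ‖b‖) / (2 * (1 + ‖b‖)) := by
    apply div_pos <;> linarith [norm_nonneg b]
  rw [hKeq, Complex.sub_re, Complex.one_re] at hK
  linarith

section CircleMeasure

variable {μ : Measure ℂ}

lemma ae_norm_eq_one_of_measure_compl_sphere (hμ : μ (Metric.sphere (0 : ℂ) 1)ᶜ = 0) :
    ∀ᵐ ξ ∂μ, ‖ξ‖ = 1 :=
  ae_iff.mpr (measure_mono_null (fun ξ hξ => by simpa using hξ) hμ)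

lemma sub_norm_le_norm_one_sub_conj_mul {ξ : ℂ} (hξ : ‖ξ‖ = 1) (z : ℂ) :
    1 - ‖z‖ ≤ ‖1 - conj ξ * z‖ := by
  simpa [hξ] using norm_sub_norm_le (1 : ℂ) (conj ξ * z)

lemma memLp_div_one_sub_conj_mul [IsFiniteMeasure μ] (hμ1 : ∀ᵐ ξ ∂μ, ‖ξ‖ = 1) {z : ℂ}
    (hz : ‖z‖ < 1) {f : ℂ → ℂ} (hf : Measurable f) (hf1 : ∀ᵐ ξ ∂μ, ‖f ξ‖ ≤ 1)
    (p : ℝ≥0∞) :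
    MemLp (fun ξ => f ξ / (1 - conj ξ * z)) p μ := by
  refine MemLp.of_bound (hf.div (measurable_const.sub
    (Complex.continuous_conj.measurable.mul_const z))).aestronglyMeasurable (1 - ‖z‖)⁻¹ ?_
  filter_upwards [hμ1, hf1] with ξ hξ hfξ
  rw [norm_div, div_eq_mul_inv]
  have hden := sub_norm_le_norm_one_sub_conj_mul hξ z
  calc ‖f ξ‖ * ‖1 - conj ξ * z‖⁻¹ ≤ 1 * (1 - ‖z‖)⁻¹ := by gcongr
    _ = (1 - ‖z‖)⁻¹ := one_mul _

variable [IsProbabilityMeasure μ] {z : ℂ}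

lemma integrable_cauchyT_oneFun (hμ1 : ∀ᵐ ξ ∂μ, ‖ξ‖ = 1) (hz : ‖z‖ < 1) :
    Integrable (fun ξ => oneFun ξ / (1 - conj ξ * z)) μ :=
  memLp_one_iff_integrable.mp
    (memLp_div_one_sub_conj_mul hμ1 hz (f := oneFun) measurable_const
      (ae_of_all _ fun _ => norm_one.le) 1)

lemma integrable_cauchyT_xibarFun (hμ1 : ∀ᵐ ξ ∂μ, ‖ξ‖ = 1) (hz : ‖z‖ < 1) :
    Integrable (fun ξ => xibarFun ξ / (1 - conj ξ * z)) μ :=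
  memLp_one_iff_integrable.mp (memLp_div_one_sub_conj_mul hμ1 hz
    Complex.continuous_conj.measurable (by filter_upwards [hμ1] with ξ hξ; simp [hξ]) 1)

lemma cauchyT_oneFun_eq (hμ1 : ∀ᵐ ξ ∂μ, ‖ξ‖ = 1) (hz : ‖z‖ < 1) :
    cauchyT μ oneFun z = 1 + z * cauchyT μ xibarFun z := by
  have hsub : cauchyT μ oneFun z - z * cauchyT μ xibarFun z = ∫ _ξ, (1 : ℂ) ∂μ := by
    rw [cauchyT, cauchyT, ← integral_const_mul,
      ← integral_sub (integrable_cauchyT_oneFun hμ1 hz)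
        ((integrable_cauchyT_xibarFun hμ1 hz).const_mul z)]
    refine integral_congr_ae ?_
    filter_upwards [hμ1] with ξ hξ
    have : 1 - conj ξ * z ≠ 0 := norm_pos_iff.mp
      ((sub_pos.mpr hz).trans_le (sub_norm_le_norm_one_sub_conj_mul hξ z))
    simp only [oneFun, xibarFun]
    field_simp
  have hone : ∫ _ξ, (1 : ℂ) ∂μ = 1 := by simp
  linear_combination hsub + hone

lemma half_lt_re_cauchyT_oneFun (hμ1 : ∀ᵐ ξ ∂μ, ‖ξ‖ = 1) (hz : ‖z‖ < 1) :
    1 / 2 < (cauchyT μ oneFun z).re := by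
  set c := 1 / 2 + (1 - ‖z‖) / (2 * (1 + ‖z‖))
  have hlt : 1 / 2 < c := lt_add_of_pos_right _ (by
    apply div_pos <;> linarith [norm_nonneg z])
  have hpt : ∀ᵐ ξ ∂μ, c ≤ RCLike.re (oneFun ξ / (1 - conj ξ * z)) := by
    filter_upwards [hμ1] with ξ hξ
    have hw : ‖conj ξ * z‖ = ‖z‖ := by simp [hξ]
    have h := re_inv_one_sub_ge (hw ▸ hz : ‖conj ξ * z‖ < 1)
    rw [hw] at h
    simpa [c, oneFun] using h
  refine hlt.trans_le ?_
  rw [cauchyT, ← RCLike.re_eq_complex_re, ← integral_re (integrable_cauchyT_oneFun hμ1 hz)]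
  calc c = ∫ _ξ, c ∂μ := by simp
    _ ≤ _ := integral_mono_ae (integrable_const c) (integrable_cauchyT_oneFun hμ1 hz).re hpt

lemma cauchyT_oneFun_sub_ne_zero (hμ1 : ∀ᵐ ξ ∂μ, ‖ξ‖ = 1) (hz : ‖z‖ < 1) {β : ℂ}
    (hβ : ‖β‖ < 1) :
    cauchyT μ oneFun z - z * conj β * cauchyT μ xibarFun z ≠ 0 := by
  have h := one_sub_mul_add_ne_zero (b := conj β) (by simpa using hβ)
    (half_lt_re_cauchyT_oneFun hμ1 hz)
  rw [cauchyT_oneFun_eq hμ1 hz] at h ⊢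
  convert h using 1
  ring

end CircleMeasure

section MultiplicationOperator

variable {μ : Measure ℂ} {M : Lp ℂ 2 μ →L[ℂ] Lp ℂ 2 μ}

lemma norm_le_one_of_ae_eq_mul (hμ1 : ∀ᵐ ξ ∂μ, ‖ξ‖ = 1)
    (hM : ∀ f : Lp ℂ 2 μ, ∀ᵐ ξ ∂μ, M f ξ = ξ * f ξ) : ‖M‖ ≤ 1 :=
  opNorm_le_bound _ zero_le_one fun f => by
    rw [one_mul]
    refine Lp.norm_le_norm_of_ae_le ?_
    filter_upwards [hM f, hμ1] with ξ hMf hξ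
    rw [hMf, norm_mul, hξ, one_mul]

lemma adjoint_apply_ae_eq_conj_mul (hμ1 : ∀ᵐ ξ ∂μ, ‖ξ‖ = 1)
    (hM : ∀ f : Lp ℂ 2 μ, ∀ᵐ ξ ∂μ, M f ξ = ξ * f ξ) (g : Lp ℂ 2 μ) :
    ∀ᵐ ξ ∂μ, adjoint M g ξ = conj ξ * g ξ := by
  have hmem : MemLp (fun ξ => conj ξ * g ξ) 2 μ :=
    (Lp.memLp g).of_le (Complex.continuous_conj.aestronglyMeasurable.mul
      (Lp.aestronglyMeasurable g)) (by filter_upwards [hμ1] with ξ hξ; simp [hξ])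
  suffices adjoint M g = hmem.toLp _ from this ▸ hmem.coeFn_toLp
  refine ext_inner_left ℂ fun f => ?_
  rw [adjoint_inner_right, L2.inner_def, L2.inner_def]
  refine integral_congr_ae ?_
  filter_upwards [hM f, hmem.coeFn_toLp] with ξ hMf hg
  rw [RCLike.inner_apply', RCLike.inner_apply', hMf, hg, map_mul]
  ring

lemma exists_one_sub_smul_adjoint_apply_eq [IsFiniteMeasure μ] (hμ1 : ∀ᵐ ξ ∂μ, ‖ξ‖ = 1)
    (hM : ∀ f : Lp ℂ 2 μ, ∀ᵐ ξ ∂μ, M f ξ = ξ * f ξ) {one xibar : Lp ℂ 2 μ}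
    (hone : ∀ᵐ ξ ∂μ, one ξ = 1) (hxibar : ∀ᵐ ξ ∂μ, xibar ξ = conj ξ) {z : ℂ}
    (hz : ‖z‖ < 1) :
    ∃ v : Lp ℂ 2 μ,
      (1 - z • adjoint M) v = xibar ∧ inner ℂ one v = cauchyT μ xibarFun z := by
  have hmem := memLp_div_one_sub_conj_mul hμ1 hz (f := xibarFun)
    Complex.continuous_conj.measurable
    (by filter_upwards [hμ1] with ξ hξ; simp [xibarFun, hξ]) 2
  refine ⟨hmem.toLp _, ?_, ?_⟩
  · rw [sub_apply, smul_apply, one_apply_eq_self]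
    refine Lp.ext ?_
    filter_upwards [Lp.coeFn_sub (hmem.toLp _) (z • adjoint M (hmem.toLp _)),
      Lp.coeFn_smul z (adjoint M (hmem.toLp _)), adjoint_apply_ae_eq_conj_mul hμ1 hM _,
      hmem.coeFn_toLp, hxibar, hμ1] with ξ hsub hsmul hadj hv hx hξ
    have : 1 - conj ξ * z ≠ 0 := norm_pos_iff.mp
      ((sub_pos.mpr hz).trans_le (sub_norm_le_norm_one_sub_conj_mul hξ z))
    rw [hsub, Pi.sub_apply, hsmul, Pi.smul_apply, hadj, hv, hx, smul_eq_mul, xibarFun]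
    field_simp
  · rw [L2.inner_def, cauchyT]
    refine integral_congr_ae ?_
    filter_upwards [hone, hmem.coeFn_toLp] with ξ h1 hv
    rw [RCLike.inner_apply', h1, hv, map_one, one_mul]

end MultiplicationOperator

lemma one_sub_smul_adjoint_clarkOp (μ : Measure ℂ) (M : Lp ℂ 2 μ →L[ℂ] Lp ℂ 2 μ)
    (xibar one : Lp ℂ 2 μ) (γ z : ℂ) :
    1 - z • adjoint (clarkOp μ M xibar one γ) =
      (1 - z • adjoint M) - (z * (conj γ - 1)) • rankOne ℂ xibar one := by
  rw [clarkOp, map_add, LinearIsometryEquiv.map_smulₛₗ, ← rankOne_def, adjoint_rankOne]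
  simp only [map_sub, starRingEnd_apply, star_one]
  module

theorem statement16
    (μ : Measure ℂ) [IsProbabilityMeasure μ] (hμ : μ (Metric.sphere (0:ℂ) 1)ᶜ = 0)
    (Mxi : Lp ℂ 2 μ →L[ℂ] Lp ℂ 2 μ)
    (hMxi : ∀ f : Lp ℂ 2 μ, ∀ᵐ ξ ∂μ, (Mxi f) ξ = ξ * f ξ)
    (one xibar : Lp ℂ 2 μ)
    (hone : ∀ᵐ ξ ∂μ, one ξ = 1) (hxibar : ∀ᵐ ξ ∂μ, xibar ξ = conj ξ)
    (β : ℂ) (hβ : ‖β‖ < 1)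
    (z : ℂ) (hz : ‖z‖ < 1) :
    IsUnit ((1 : Lp ℂ 2 μ →L[ℂ] Lp ℂ 2 μ) -
        z • ContinuousLinearMap.adjoint (clarkOp μ Mxi xibar one β)) ∧
    cauchyT μ oneFun z - z * conj β * cauchyT μ xibarFun z ≠ 0 ∧
    (inner ℂ one (Ring.inverse ((1 : Lp ℂ 2 μ →L[ℂ] Lp ℂ 2 μ) -
        z • ContinuousLinearMap.adjoint (clarkOp μ Mxi xibar one β)) xibar) : ℂ) =
      cauchyT μ xibarFun z /
        (cauchyT μ oneFun z - z * conj β * cauchyT μ xibarFun z) := by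
  have hμ1 := ae_norm_eq_one_of_measure_compl_sphere hμ
  obtain ⟨v, hAv, hv⟩ := exists_one_sub_smul_adjoint_apply_eq hμ1 hMxi hone hxibar hz
  have hA : IsUnit (1 - z • adjoint Mxi) := isUnit_one_sub_of_norm_lt_one <| by
    rw [norm_smul, LinearIsometryEquiv.norm_map]
    exact mul_lt_one_of_nonneg_of_lt_one_left (norm_nonneg z) hz
      (norm_le_one_of_ae_eq_mul hμ1 hMxi)
  have hD : 1 - z * (conj β - 1) * inner ℂ one v =
      cauchyT μ oneFun z - z * conj β * cauchyT μ xibarFun z := by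
    rw [hv, cauchyT_oneFun_eq hμ1 hz]
    ring
  have hDne := cauchyT_oneFun_sub_ne_zero hμ1 hz hβ
  obtain ⟨hunit, hinv⟩ := isUnit_sub_smul_rankOne_and_inverse_apply hA hAv (hD ▸ hDne)
  rw [one_sub_smul_adjoint_clarkOp]
  refine ⟨hunit, hDne, ?_⟩
  rw [hinv, inner_smul_right, hD, hv, div_eq_inv_mul]
end
end
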